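/- arXiv:1104.0971 — 2 statements merged into one kernel-verified Lean document; each statement's English description precedes it below -/
import Mathlib

section
/- Let n ≥ 1 and λ_1, …, λ_n be real numbers with λ_i ≥ -C for all i, where C ≥ 0. Set H = Σ_i λ_i and |A|² = Σ_i λ_i². Then |A|² ≤ (2n+1)H² + (2n³ - n + 1)C². -/
/-!
Shifting by `C` makes every `λ i + C` nonnegative, so `∑ (λ i + C)² ≤ (∑ (λ i + C))²`. Expanding
gives `|A|² ≤ H² + 2(n-1)CH + n(n-1)C²`, and the cross term is absorbed by
`2(n-1)CH ≤ H² + (n-1)²C²`, leaving `|A|² ≤ 2H² + (2n-1)(n-1)C²`, which is stronger than the claim.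
-/

open Finset

variable {ι : Type*} (s : Finset ι) (f : ι → ℝ) (C : ℝ)

theorem sum_sq_add_le_sq_sum_add_of_neg_le (h : ∀ i ∈ s, -C ≤ f i) :
    ∑ i ∈ s, f i ^ 2 + 2 * C * ∑ i ∈ s, f i + #s * C ^ 2 ≤ (∑ i ∈ s, f i + #s * C) ^ 2 := by
  have hshift : ∑ i ∈ s, (f i + C) ^ 2 ≤ (∑ i ∈ s, (f i + C)) ^ 2 :=
    sum_sq_le_sq_sum_of_nonneg fun i hi => by linarith [h i hi]
  simp only [add_sq, sum_add_distrib, sum_const, nsmul_eq_mul, ← sum_mul, ← mul_sum] at hshift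
  linarith

theorem sum_sq_le_two_mul_sq_sum_add_of_neg_le (h : ∀ i ∈ s, -C ≤ f i) :
    ∑ i ∈ s, f i ^ 2 ≤ 2 * (∑ i ∈ s, f i) ^ 2 + (2 * #s - 1) * (#s - 1) * C ^ 2 := by
  nlinarith [sum_sq_add_le_sq_sum_add_of_neg_le s f C h, sq_nonneg (∑ i ∈ s, f i - (#s - 1) * C)]

theorem stmt_0_general (n : ℕ) (hn : 1 ≤ n) (C : ℝ)
    (lam : Fin n → ℝ) (h : ∀ i, -C ≤ lam i) :
    (∑ i, lam i ^ 2) ≤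
      (2 * (n : ℝ) + 1) * (∑ i, lam i) ^ 2 + (2 * (n : ℝ) ^ 3 - n + 1) * C ^ 2 := by
  have hpinch := sum_sq_le_two_mul_sq_sum_add_of_neg_le univ lam C fun i _ => h i
  rw [card_univ, Fintype.card_fin] at hpinch
  have hn' : (1 : ℝ) ≤ n := by exact_mod_cast hn
  have hH : 0 ≤ (2 * (n : ℝ) - 1) * (∑ i, lam i) ^ 2 := mul_nonneg (by linarith) (sq_nonneg _)
  have hC2 : 0 ≤ 2 * (n : ℝ) * ((n - 1) ^ 2 + n) * C ^ 2 := by positivity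
  linarith

theorem stmt_0 (n : ℕ) (hn : 1 ≤ n) (C : ℝ) (hC : 0 ≤ C)
    (lam : Fin n → ℝ) (h : ∀ i, -C ≤ lam i) :
    (∑ i, lam i ^ 2) ≤
      (2 * (n : ℝ) + 1) * (∑ i, lam i) ^ 2 + (2 * (n : ℝ) ^ 3 - n + 1) * C ^ 2 :=
  stmt_0_general n hn C lam h
end

section
/- Let μ > 1 and let L: ℕ → ℝ_{>0}, B, C > 0 satisfy L(k+1) ≤ C^{1/q_{k+1}} B^{1/q_k} μ^{k/q_k} L(k) for all k, where q_k = q₀ μ^k with q₀ > 0. Then limsup_k L(k) ≤ C^{S₁} B^{S₀} μ^{S} L(0), where S₀ = Σ_{k≥0} 1/q_k = μ/(q₀(μ-1)), S₁ = S₀/μ, and S = Σ_{k≥0} k/q_k = μ/(q₀(μ-1)²). -/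
/-! Writing each factor `C ^ x = exp (x * log C)`, the recursion becomes
`L (k + 1) ≤ exp (e k) * L k` with `e k = log C / q (k+1) + log B / q k + k log μ / q k`.
Iterating gives `L n ≤ exp (∑_{k<n} e k) * L 0`, and the partial sums of `e` converge because
`1 / q k` and `k / q k` are (arithmetico-)geometric series in `μ⁻¹`. -/

open Filter Finset Real Topology

theorem le_exp_sum_range_mul {L e : ℕ → ℝ} (hrec : ∀ k, L (k + 1) ≤ exp (e k) * L k) (n : ℕ) :
    L n ≤ exp (∑ k ∈ range n, e k) * L 0 := by
  induction n with
  | zero => simp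
  | succ n ih =>
    calc L (n + 1) ≤ exp (e n) * L n := hrec n
      _ ≤ exp (e n) * (exp (∑ k ∈ range n, e k) * L 0) := by gcongr
      _ = exp (∑ k ∈ range (n + 1), e k) * L 0 := by
        rw [sum_range_succ, exp_add]; ring

theorem limsup_le_exp_mul_of_le_exp_mul {L e : ℕ → ℝ} {s : ℝ} (hL : ∀ k, 0 ≤ L k)
    (he : HasSum e s) (hrec : ∀ k, L (k + 1) ≤ exp (e k) * L k) :
    limsup L atTop ≤ exp s * L 0 := by
  have hlim : Tendsto (fun n ↦ exp (∑ k ∈ range n, e k) * L 0) atTop (𝓝 (exp s * L 0)) :=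
    ((continuous_exp.tendsto s).comp he.tendsto_sum_nat).mul_const _
  calc limsup L atTop ≤ limsup (fun n ↦ exp (∑ k ∈ range n, e k) * L 0) atTop :=
        limsup_le_limsup (Eventually.of_forall (le_exp_sum_range_mul hrec))
          (isBoundedUnder_of ⟨0, hL⟩).isCoboundedUnder_le hlim.isBoundedUnder_le
    _ = exp s * L 0 := hlim.limsup_eq

theorem hasSum_one_div_mul_pow {μ : ℝ} (hμ : 1 < μ) (q : ℝ) :
    HasSum (fun k : ℕ ↦ 1 / (q * μ ^ k)) (μ / (q * (μ - 1))) := by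
  have hμ0 : μ ≠ 0 := by positivity
  have hμ1 : μ - 1 ≠ 0 := sub_ne_zero.2 hμ.ne'
  have hf : (fun k : ℕ ↦ 1 / (q * μ ^ k)) = fun k ↦ q⁻¹ * μ⁻¹ ^ k := by
    ext k; rw [inv_pow]; field_simp
  have hs : μ / (q * (μ - 1)) = q⁻¹ * (1 - μ⁻¹)⁻¹ := by field_simp
  rw [hf, hs]
  exact (hasSum_geometric_of_lt_one (by positivity) (inv_lt_one_of_one_lt₀ hμ)).mul_left q⁻¹

theorem hasSum_one_div_mul_pow_succ {μ : ℝ} (hμ : 1 < μ) (q : ℝ) :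
    HasSum (fun k : ℕ ↦ 1 / (q * μ ^ (k + 1))) (μ / (q * (μ - 1)) / μ) := by
  have hf : (fun k : ℕ ↦ 1 / (q * μ ^ (k + 1))) = fun k ↦ 1 / (q * μ ^ k) / μ := by
    ext k; rw [pow_succ, ← mul_assoc, div_div]
  exact hf ▸ (hasSum_one_div_mul_pow hμ q).div_const μ

theorem hasSum_natCast_div_mul_pow {μ : ℝ} (hμ : 1 < μ) (q : ℝ) :
    HasSum (fun k : ℕ ↦ (k : ℝ) / (q * μ ^ k)) (μ / (q * (μ - 1) ^ 2)) := by
  have hμ0 : μ ≠ 0 := by positivity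
  have hμ1 : μ - 1 ≠ 0 := sub_ne_zero.2 hμ.ne'
  have hr : ‖μ⁻¹‖ < 1 := by
    rw [norm_inv, Real.norm_of_nonneg (by positivity)]; exact inv_lt_one_of_one_lt₀ hμ
  have hf : (fun k : ℕ ↦ (k : ℝ) / (q * μ ^ k)) = fun k : ℕ ↦ q⁻¹ * (k * μ⁻¹ ^ k) := by
    ext k; rw [inv_pow]; field_simp
  have hs : μ / (q * (μ - 1) ^ 2) = q⁻¹ * (μ⁻¹ / (1 - μ⁻¹) ^ 2) := by field_simp
  rw [hf, hs]
  exact (hasSum_coe_mul_geometric_of_norm_lt_one hr).mul_left q⁻¹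

theorem stmt_16_general (μ q₀ B C : ℝ) (hμ : 1 < μ)
    (hB : 0 < B) (hC : 0 < C) (L : ℕ → ℝ) (hL : ∀ k, 0 < L k)
    (hrec : ∀ k : ℕ, L (k + 1) ≤
      C ^ (1 / (q₀ * μ ^ (k + 1))) * B ^ (1 / (q₀ * μ ^ k)) *
        μ ^ ((k : ℝ) / (q₀ * μ ^ k)) * L k) :
    Filter.limsup L Filter.atTop ≤
      C ^ (μ / (q₀ * (μ - 1)) / μ) * B ^ (μ / (q₀ * (μ - 1))) *
        μ ^ (μ / (q₀ * (μ - 1) ^ 2)) * L 0 := by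
  have hμ0 : 0 < μ := by positivity
  have hsum := (((hasSum_one_div_mul_pow_succ hμ q₀).mul_left (log C)).add
    ((hasSum_one_div_mul_pow hμ q₀).mul_left (log B))).add
    ((hasSum_natCast_div_mul_pow hμ q₀).mul_left (log μ))
  simp only [rpow_def_of_pos hC, rpow_def_of_pos hB, rpow_def_of_pos hμ0, ← exp_add] at hrec ⊢
  exact limsup_le_exp_mul_of_le_exp_mul (fun k ↦ (hL k).le) hsum hrec

theorem stmt_16 (μ q₀ B C : ℝ) (hμ : 1 < μ) (hq₀ : 0 < q₀)
    (hB : 0 < B) (hC : 0 < C) (L : ℕ → ℝ) (hL : ∀ k, 0 < L k)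
    (hrec : ∀ k : ℕ, L (k + 1) ≤
      C ^ (1 / (q₀ * μ ^ (k + 1))) * B ^ (1 / (q₀ * μ ^ k)) *
        μ ^ ((k : ℝ) / (q₀ * μ ^ k)) * L k) :
    Filter.limsup L Filter.atTop ≤
      C ^ (μ / (q₀ * (μ - 1)) / μ) * B ^ (μ / (q₀ * (μ - 1))) *
        μ ^ (μ / (q₀ * (μ - 1) ^ 2)) * L 0 :=
  stmt_16_general μ q₀ B C hμ hB hC L hL hrec
end
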